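/- arXiv:2411.00806 — 3 statements merged into one kernel-verified Lean document; each statement's English description precedes it below -/
import Mathlib

section
/- If two families (t_1,…,t_N) and (t'_1,…,t'_N) of T₀ topologies on a finite set V induce the same edge-weight function w and the same dimension function d (defined in the context), then t_i = t'_i for every i = 1,…,N. In other words, multiple T₀-topologies on a finite point set are losslessly represented by the vertex-edge-weighted graph (V, E, w, d). -/
open scoped Classical

/-- The specialization relation of a topology: `x ≤_t y` iff `x` lies in the
closure of `{y}`. For a `T₀` topology this is a partial order. -/
def specLE {V : Type*} (t : TopologicalSpace V) (x y : V) : Prop :=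
  x ∈ @closure V t {y}

/-- Strict specialization. -/
def specLT {V : Type*} (t : TopologicalSpace V) (x y : V) : Prop :=
  specLE t x y ∧ x ≠ y

/-- `y` covers `x` in the specialization order: `x < y` with no strictly
intermediate point.  These covering pairs are the edges of the Hasse diagram. -/
def hasseCovers {V : Type*} (t : TopologicalSpace V) (x y : V) : Prop :=
  specLT t x y ∧ ∀ z, specLT t x z → specLT t z y → False

/-- `{x,y}` is an (undirected) edge of the Hasse diagram of the specialization
order of `t`. -/
def hasseEdge {V : Type*} (t : TopologicalSpace V) (x y : V) : Prop :=
  hasseCovers t x y ∨ hasseCovers t y x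

/-- The edge-weight function of a family of topologies `t i` with associated
primes `pr i`: `w({x,y}) = ∏_{i : {x,y} ∈ E(tᵢ)} pr i` (empty product `= 1`). -/
noncomputable def edgeWeight {V : Type*} {N : ℕ}
    (t : Fin N → TopologicalSpace V) (pr : Fin N → ℕ) (x y : V) : ℕ :=
  ∏ i : Fin N, if hasseEdge (t i) x y then pr i else 1

/-- The dimension (height) of a point `v` in the specialization order of `t`:
the maximal length `n` of a chain `x₀ < x₁ < ⋯ < xₙ = v` with top element `v`. -/
noncomputable def topoDim {V : Type*} (t : TopologicalSpace V) (v : V) : ℕ :=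
  sSup {n : ℕ | ∃ f : Fin (n + 1) → V, f (Fin.last n) = v ∧
    ∀ j k : Fin (n + 1), j < k → specLT t (f j) (f k)}

/-!
The prime `p_i` divides `w {x, y}` exactly when `{x, y}` is a Hasse edge of `t_i`, so `w` recovers
every Hasse diagram as an undirected graph. The dimension is the height in the specialization
order, hence strictly monotone, so it orients each Hasse edge and recovers the covering relation.
On a finite set the specialization order is the reflexive-transitive closure of its covering
relation, and a finite topology is determined by its specialization order, its open sets being
exactly the sets closed under generization.
-/

namespace Order

variable {α : Type*} [Preorder α]

lemma exists_strictMono_fin_last_eq_iff_le_height (a : α) (n : ℕ) :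
    (∃ f : Fin (n + 1) → α, f (Fin.last n) = a ∧ StrictMono f) ↔ (n : ℕ∞) ≤ height a := by
  constructor
  · rintro ⟨f, hlast, hf⟩
    let p : LTSeries α := ⟨n, f, fun i => hf i.castSucc_lt_succ⟩
    exact hlast ▸ length_le_height_last (p := p)
  · intro h
    obtain ⟨p, hlast, rfl⟩ := exists_series_of_le_height a h
    exact ⟨p, hlast, p.strictMono⟩

lemma height_ne_top_of_finite [Finite α] (a : α) : height a ≠ ⊤ := by
  have := Fintype.ofFinite α
  refine ne_top_of_le_ne_top (ENat.natCast_ne_top (Fintype.card α)) (height_le fun p _ => ?_)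
  exact_mod_cast p.length_lt_card.le

lemma sSup_chainLengths_eq_height [Finite α] (a : α) :
    ((sSup {n : ℕ | ∃ f : Fin (n + 1) → α, f (Fin.last n) = a ∧ StrictMono f} : ℕ) : ℕ∞) =
      height a := by
  obtain ⟨m, hm⟩ := ENat.ne_top_iff_exists.1 (height_ne_top_of_finite a)
  have hS : {n : ℕ | ∃ f : Fin (n + 1) → α, f (Fin.last n) = a ∧ StrictMono f} = Set.Iic m := by
    ext n
    rw [Set.mem_ofPred_eq, exists_strictMono_fin_last_eq_iff_le_height, ← hm, Nat.cast_le,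
      Set.mem_Iic]
  rw [hS, csSup_Iic, hm]

end Order

section Specialization

open Specialization

variable {V : Type*} [t : TopologicalSpace V]

lemma specLE_iff_toEquiv_le (x y : V) : specLE t x y ↔ toEquiv x ≤ toEquiv y :=
  specializes_iff_mem_closure.symm

variable [T0Space V]

lemma specLT_iff_toEquiv_lt (x y : V) : specLT t x y ↔ toEquiv x < toEquiv y := by
  rw [specLT, specLE_iff_toEquiv_le, lt_iff_le_and_ne, toEquiv_inj.ne]

lemma hasseCovers_eq_covBy : hasseCovers t = fun x y => toEquiv x ⋖ toEquiv y := by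
  ext x y
  simp only [hasseCovers, CovBy, specLT_iff_toEquiv_lt]
  exact Iff.rfl

lemma topoDim_eq_height [Finite V] (v : V) :
    (topoDim t v : ℕ∞) = Order.height (toEquiv v) := by
  have : Finite (Specialization V) := inferInstanceAs (Finite V)
  rw [← Order.sSup_chainLengths_eq_height]
  simp only [topoDim, specLT_iff_toEquiv_lt]
  rfl

lemma topoDim_lt_topoDim [Finite V] {x y : V} (h : specLT t x y) :
    topoDim t x < topoDim t y := by
  have : Finite (Specialization V) := inferInstanceAs (Finite V)
  have hxy := Order.height_strictMono ((specLT_iff_toEquiv_lt x y).1 h)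
    (Order.height_ne_top_of_finite _).lt_top
  rw [← topoDim_eq_height, ← topoDim_eq_height] at hxy
  exact_mod_cast hxy

lemma hasseCovers_iff_hasseEdge_and_topoDim_lt [Finite V] (x y : V) :
    hasseCovers t x y ↔ hasseEdge t x y ∧ topoDim t x < topoDim t y := by
  refine ⟨fun h => ⟨Or.inl h, topoDim_lt_topoDim h.1⟩, ?_⟩
  rintro ⟨h | h, hlt⟩
  · exact h
  · exact absurd hlt (topoDim_lt_topoDim h.1).not_gt

lemma specializes_iff_reflTransGen_hasseCovers [Finite V] (x y : V) :
    x ⤳ y ↔ Relation.ReflTransGen (hasseCovers t) y x := by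
  have : Fintype (Specialization V) := Fintype.ofFinite V
  let := Fintype.toLocallyFiniteOrder (α := Specialization V)
  rw [hasseCovers_eq_covBy, ← toEquiv_le_toEquiv]
  exact le_iff_reflTransGen_covBy

end Specialization

lemma AlexandrovDiscrete.ext_of_specializes_iff {V : Type*} {t t' : TopologicalSpace V}
    [@AlexandrovDiscrete V t] [@AlexandrovDiscrete V t']
    (h : ∀ x y, @Specializes V t x y ↔ @Specializes V t' x y) : t = t' := by
  ext s
  rw [@isOpen_iff_forall_specializes V t, @isOpen_iff_forall_specializes V t']
  simp only [h]

lemma TopologicalSpace.ext_of_hasseCovers_eq {V : Type*} [Finite V] {t t' : TopologicalSpace V}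
    [@T0Space V t] [@T0Space V t'] (h : hasseCovers t = hasseCovers t') : t = t' :=
  AlexandrovDiscrete.ext_of_specializes_iff fun x y => by
    rw [specializes_iff_reflTransGen_hasseCovers (t := t),
      specializes_iff_reflTransGen_hasseCovers (t := t'), h]

lemma Nat.Prime.dvd_prod_ite_iff {ι : Type*} [Fintype ι] {p : ι → ℕ} (hp : ∀ i, (p i).Prime)
    (hinj : Function.Injective p) (P : ι → Prop) [DecidablePred P] (i : ι) :
    p i ∣ ∏ j, (if P j then p j else 1) ↔ P i := by
  rw [(hp i).prime.dvd_finsetProd_iff]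
  constructor
  · rintro ⟨j, -, hj⟩
    split_ifs at hj with hPj
    · rwa [hinj ((Nat.prime_dvd_prime_iff_eq (hp i) (hp j)).1 hj)]
    · exact absurd (Nat.dvd_one.1 hj) (hp i).ne_one
  · exact fun hPi => ⟨i, Finset.mem_univ i, by simp [hPi]⟩

theorem multi_topologies_lossless_representation_general {V : Type*} [Fintype V]
    {N : ℕ}
    (t t' : Fin N → TopologicalSpace V)
    (ht : ∀ i, @T0Space V (t i)) (ht' : ∀ i, @T0Space V (t' i))
    (pr : Fin N → ℕ) (hpr : ∀ i, Nat.Prime (pr i))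
    (hpr_inj : Function.Injective pr)
    (hw : ∀ x y : V, edgeWeight t pr x y = edgeWeight t' pr x y)
    (hd : ∀ i (v : V), topoDim (t i) v = topoDim (t' i) v) :
    ∀ i, t i = t' i := by
  intro i
  have hedge (x y : V) : hasseEdge (t i) x y ↔ hasseEdge (t' i) x y := by
    rw [← Nat.Prime.dvd_prod_ite_iff hpr hpr_inj (fun j => hasseEdge (t j) x y),
      ← Nat.Prime.dvd_prod_ite_iff hpr hpr_inj (fun j => hasseEdge (t' j) x y)]
    exact Iff.of_eq (congrArg (pr i ∣ ·) (hw x y))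
  have := ht i
  have := ht' i
  refine TopologicalSpace.ext_of_hasseCovers_eq (funext₂ fun x y => propext ?_)
  rw [hasseCovers_iff_hasseEdge_and_topoDim_lt (t := t i),
    hasseCovers_iff_hasseEdge_and_topoDim_lt (t := t' i), hedge, hd, hd]

/-- **Lossless representation of multiple `T₀`-topologies on a finite point set**:
if two families `(t₁,…,t_N)` and `(t'₁,…,t'_N)` of `T₀` topologies on a finite set
`V` induce the same edge-weight function `w` (built from pairwise distinct primes
`p₁,…,p_N`) and the same dimension function `d`, then `tᵢ = t'ᵢ` for all `i`. -/
theorem multi_topologies_lossless_representation {V : Type*} [Fintype V]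
    {N : ℕ} (hN : 1 ≤ N)
    (t t' : Fin N → TopologicalSpace V)
    (ht : ∀ i, @T0Space V (t i)) (ht' : ∀ i, @T0Space V (t' i))
    (pr : Fin N → ℕ) (hpr : ∀ i, Nat.Prime (pr i))
    (hpr_inj : Function.Injective pr)
    (hw : ∀ x y : V, edgeWeight t pr x y = edgeWeight t' pr x y)
    (hd : ∀ i (v : V), topoDim (t i) v = topoDim (t' i) v) :
    ∀ i, t i = t' i :=
  multi_topologies_lossless_representation_general t t' ht ht' pr hpr hpr_inj hw hd
end

section
/- For every x ∈ B, ∫_B |x − y|_p^{−α} (ψ_{B,j}(y) − ψ_{B,j}(x)) dμ(y) = −p^{d(α−1)} · ψ_{B,j}(x); that is, the Kozyrev wavelet ψ_{B,j} is an eigenfunction of the Vladimirov-type integral operator on the ball B with eigenvalue −p^{d(α−1)}. (The integrand vanishes whenever y lies in the same child subball as x, so it is bounded and integrable despite the singular kernel.) -/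
open MeasureTheory

/-- The **Kozyrev wavelet** `ψ_{B,j}` attached to the ball
`B = {x ∈ ℚ_p : |x − b|_p ≤ p^{−d}}`, a primitive `p`-th root of unity `ζ` and
`j ∈ {1,…,p−1}`: writing `x = b + p^d·u` with `u ∈ ℤ_p`, set
`ψ_{B,j}(x) = ζ^{j·(u mod p)}` for `x ∈ B` and `ψ_{B,j}(x) = 0` otherwise. -/
noncomputable def kozyrevWavelet (p : ℕ) [hp : Fact p.Prime] (b : ℚ_[p]) (d : ℤ)
    (ζ : ℂ) (j : ℕ) (x : ℚ_[p]) : ℂ :=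
  if h : ‖x - b‖ ≤ (p : ℝ) ^ (-d) then
    ζ ^ (j * (PadicInt.toZMod (⟨(x - b) / (p : ℚ_[p]) ^ d, by
      have hp1 : (1 : ℝ) < p := by exact_mod_cast hp.out.one_lt
      have hpos : (0 : ℝ) < (p : ℝ) ^ (-d) := zpow_pos (by linarith) _
      show ‖(x - b) / (p : ℚ_[p]) ^ d‖ ≤ 1
      rw [norm_div, norm_zpow, Padic.norm_p, inv_zpow, ← zpow_neg,
        div_le_one hpos]
      exact h⟩ : ℤ_[p])).val)
  else 0


/-!
The wavelet is constant on each of the `p` child balls of `B`, which are the open balls of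
radius `p^{-d}` inside `B`; hence for `y ∈ B` either `ψ y = ψ x` or `|x - y|_p = p^{-d}`, and the
integrand equals `p^{dα} (ψ y - ψ x)` on all of `B`. Translating by `p^d` multiplies `ψ` by
`ζ^j ≠ 1`, so translation invariance of `μ` forces `∫ ψ = 0`, while `μ B = p^{-d}` because every
ball is the disjoint union of `p` translates of its children.
-/

open Metric

variable {p : ℕ} [hp : Fact p.Prime]

theorem PadicInt.toZMod_eq_of_norm_sub_lt_one {z w : ℤ_[p]} (h : ‖z - w‖ < 1) :
    toZMod z = toZMod w := by
  rwa [← sub_eq_zero, ← map_sub, ← RingHom.mem_ker, ker_toZMod, IsLocalRing.mem_maximalIdeal,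
    mem_nonunits]

theorem IsUltrametricDist.norm_sub_le_iff_of_norm_sub_le {E : Type*} [SeminormedAddCommGroup E]
    [IsUltrametricDist E] {x y b : E} {r : ℝ} (h : ‖x - y‖ ≤ r) :
    ‖x - b‖ ≤ r ↔ ‖y - b‖ ≤ r := by
  rw [← mem_closedBall_iff_norm, ← mem_closedBall_iff_norm, mem_closedBall_comm,
    mem_closedBall_comm (x := y), closedBall_eq_of_mem (mem_closedBall_iff_norm.mpr h)]

namespace Padic

theorem closedBall_zpow_eq_biUnion_ball (k : ℤ) :
    closedBall (0 : ℚ_[p]) ((p : ℝ) ^ (-k))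
      = ⋃ i ∈ Finset.range p, ball ((i : ℚ_[p]) * (p : ℚ_[p]) ^ k) ((p : ℝ) ^ (-k)) := by
  have hpk : (p : ℚ_[p]) ^ k ≠ 0 := zpow_ne_zero _ (by exact_mod_cast hp.out.ne_zero)
  have hpos : (0 : ℝ) < (p : ℝ) ^ (-k) := zpow_pos (by exact_mod_cast hp.out.pos) _
  ext y
  simp only [mem_closedBall_iff_norm, sub_zero, Set.mem_iUnion, Finset.mem_range,
    mem_ball_iff_norm, exists_prop]
  constructor
  · intro hy
    have hz : ‖y / (p : ℚ_[p]) ^ k‖ ≤ 1 := by rwa [norm_div, norm_p_zpow, div_le_one hpos]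
    let z : ℤ_[p] := ⟨y / (p : ℚ_[p]) ^ k, hz⟩
    have hz1 : ‖y / (p : ℚ_[p]) ^ k - z.zmodRepr‖ < 1 := z.norm_sub_zmodRepr_lt_one
    refine ⟨z.zmodRepr, z.zmodRepr_lt_p, ?_⟩
    have hy : y - z.zmodRepr * (p : ℚ_[p]) ^ k
        = (y / (p : ℚ_[p]) ^ k - z.zmodRepr) * (p : ℚ_[p]) ^ k := by
      field_simp
    rw [hy, norm_mul, norm_p_zpow]
    simpa using mul_lt_mul_of_pos_right hz1 hpos
  · rintro ⟨i, -, hi⟩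
    rw [← sub_add_cancel y (i * (p : ℚ_[p]) ^ k)]
    refine (nonarchimedean _ _).trans (max_le hi.le ?_)
    rw [norm_mul, norm_p_zpow]
    exact mul_le_of_le_one_left hpos.le (by simpa using norm_int_le_one (p := p) i)

theorem pairwiseDisjoint_ball_zpow (k : ℤ) :
    (Finset.range p : Set ℕ).PairwiseDisjoint
      fun i => ball ((i : ℚ_[p]) * (p : ℚ_[p]) ^ k) ((p : ℝ) ^ (-k)) := by
  have hpk : (p : ℚ_[p]) ^ k ≠ 0 := zpow_ne_zero _ (by exact_mod_cast hp.out.ne_zero)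
  have hpos : (0 : ℝ) < (p : ℝ) ^ (-k) := zpow_pos (by exact_mod_cast hp.out.pos) _
  intro i hi i' hi' hne
  rw [Function.onFun, Set.disjoint_left]
  intro y hy hy'
  rw [mem_ball_iff_norm] at hy hy'
  have hdiff : ((i' - i : ℤ) : ℚ_[p])
      = ((y - i * (p : ℚ_[p]) ^ k) - (y - i' * (p : ℚ_[p]) ^ k)) / (p : ℚ_[p]) ^ k := by
    push_cast
    field_simp
    ring
  have hlt : ‖((i' - i : ℤ) : ℚ_[p])‖ < 1 := by
    rw [hdiff, norm_div, norm_p_zpow, div_lt_one hpos, sub_eq_add_neg]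
    exact (nonarchimedean _ _).trans_lt (max_lt hy (by rwa [norm_neg]))
  rw [norm_intCast_lt_one_iff] at hlt
  exact hne (Nat.ModEq.eq_of_lt_of_lt ((Nat.modEq_iff_dvd).mpr hlt) (by simpa using hi)
    (by simpa using hi'))

theorem ball_zpow_eq_closedBall (c : ℚ_[p]) (k : ℤ) :
    ball c ((p : ℝ) ^ (-k)) = closedBall c ((p : ℝ) ^ (-(k + 1))) := by
  ext y
  rw [mem_ball_iff_norm, mem_closedBall_iff_norm, norm_lt_pow_iff_norm_le_pow_sub_one, neg_add']

section Measure

variable [MeasurableSpace ℚ_[p]] [BorelSpace ℚ_[p]] (μ : Measure ℚ_[p]) [μ.IsAddHaarMeasure]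

theorem measure_closedBall_zpow_eq_mul (k : ℤ) :
    μ (closedBall 0 ((p : ℝ) ^ (-k))) = p * μ (closedBall 0 ((p : ℝ) ^ (-(k + 1)))) := by
  rw [closedBall_zpow_eq_biUnion_ball, measure_biUnion_finset (pairwiseDisjoint_ball_zpow k)
    fun _ _ => measurableSet_ball]
  simp_rw [Measure.addHaar_ball_center μ, Finset.sum_const, Finset.card_range, nsmul_eq_mul,
    ball_zpow_eq_closedBall]

theorem measure_closedBall_zpow (hμ : μ (closedBall 0 1) = 1) (c : ℚ_[p]) (k : ℤ) :
    μ (closedBall c ((p : ℝ) ^ (-k))) = ENNReal.ofReal ((p : ℝ) ^ (-k)) := by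
  have hp0 : (p : ENNReal) ≠ 0 := by exact_mod_cast hp.out.ne_zero
  have hrec (k : ℤ) :
      ENNReal.ofReal ((p : ℝ) ^ (-k)) = p * ENNReal.ofReal ((p : ℝ) ^ (-(k + 1))) := by
    rw [← ENNReal.ofReal_natCast, ← ENNReal.ofReal_mul (Nat.cast_nonneg p),
      ← zpow_one_add₀ (by exact_mod_cast hp.out.ne_zero)]
    ring_nf
  rw [Measure.addHaar_closedBall_center]
  induction k using Int.induction_on with
  | zero => simpa using hμ
  | succ n ih =>
    exact (ENNReal.mul_right_inj hp0 (ENNReal.natCast_ne_top p)).mp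
      ((measure_closedBall_zpow_eq_mul μ n).symm.trans (ih.trans (hrec n)))
  | pred n ih => rw [measure_closedBall_zpow_eq_mul, hrec, sub_add_cancel, ih]

end Measure

end Padic

section KozyrevWavelet

variable {b : ℚ_[p]} {d : ℤ} {ζ : ℂ} {j : ℕ}

theorem kozyrevWavelet_eq_of_mul_zpow_eq {y : ℚ_[p]} (z : ℤ_[p])
    (hz : (z : ℚ_[p]) * (p : ℚ_[p]) ^ d = y - b) :
    kozyrevWavelet p b d ζ j y = ζ ^ (j * (PadicInt.toZMod z).val) := by
  have hpd : (p : ℚ_[p]) ^ d ≠ 0 := zpow_ne_zero _ (by exact_mod_cast hp.out.ne_zero)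
  have hy : ‖y - b‖ ≤ (p : ℝ) ^ (-d) := by
    rw [← hz, norm_mul, Padic.norm_p_zpow]
    exact mul_le_of_le_one_left (zpow_pos (by exact_mod_cast hp.out.pos) _).le z.norm_le_one
  rw [kozyrevWavelet, dif_pos hy]
  congr 4
  exact PadicInt.ext (eq_div_of_mul_eq hpd hz).symm

theorem exists_mul_zpow_eq_sub {y : ℚ_[p]} (hy : ‖y - b‖ ≤ (p : ℝ) ^ (-d)) :
    ∃ z : ℤ_[p], (z : ℚ_[p]) * (p : ℚ_[p]) ^ d = y - b := by
  have hpd : (p : ℚ_[p]) ^ d ≠ 0 := zpow_ne_zero _ (by exact_mod_cast hp.out.ne_zero)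
  have hpos : (0 : ℝ) < (p : ℝ) ^ (-d) := zpow_pos (by exact_mod_cast hp.out.pos) _
  refine ⟨⟨(y - b) / (p : ℚ_[p]) ^ d, ?_⟩, div_mul_cancel₀ _ hpd⟩
  rwa [norm_div, Padic.norm_p_zpow, div_le_one hpos]

theorem kozyrevWavelet_eq_zero_of_not_le {y : ℚ_[p]} (hy : ¬‖y - b‖ ≤ (p : ℝ) ^ (-d)) :
    kozyrevWavelet p b d ζ j y = 0 :=
  dif_neg hy

theorem kozyrevWavelet_eq_of_norm_sub_lt {x y : ℚ_[p]} (h : ‖x - y‖ < (p : ℝ) ^ (-d)) :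
    kozyrevWavelet p b d ζ j x = kozyrevWavelet p b d ζ j y := by
  have hmem := IsUltrametricDist.norm_sub_le_iff_of_norm_sub_le (b := b) h.le
  by_cases hx : ‖x - b‖ ≤ (p : ℝ) ^ (-d)
  · obtain ⟨z, hz⟩ := exists_mul_zpow_eq_sub hx
    obtain ⟨w, hw⟩ := exists_mul_zpow_eq_sub (hmem.mp hx)
    rw [kozyrevWavelet_eq_of_mul_zpow_eq z hz, kozyrevWavelet_eq_of_mul_zpow_eq w hw,
      PadicInt.toZMod_eq_of_norm_sub_lt_one]
    have hzw : ((z - w : ℤ_[p]) : ℚ_[p]) * (p : ℚ_[p]) ^ d = x - y := by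
      push_cast
      linear_combination hz - hw
    rwa [← mul_lt_iff_lt_one_left (zpow_pos (by exact_mod_cast hp.out.pos : (0 : ℝ) < p) (-d)),
      PadicInt.norm_def, ← Padic.norm_p_zpow, ← norm_mul, hzw, Padic.norm_p_zpow]
  · rw [kozyrevWavelet_eq_zero_of_not_le hx, kozyrevWavelet_eq_zero_of_not_le (mt hmem.mpr hx)]

theorem isLocallyConstant_kozyrevWavelet : IsLocallyConstant (kozyrevWavelet p b d ζ j) := by
  refine (IsLocallyConstant.iff_eventually_eq _).mpr fun x => ?_
  filter_upwards [ball_mem_nhds x (zpow_pos (by exact_mod_cast hp.out.pos : (0 : ℝ) < p) (-d))]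
    with y hy
  exact kozyrevWavelet_eq_of_norm_sub_lt (mem_ball_iff_norm.mp hy)

theorem kozyrevWavelet_add_zpow (hζ : ζ ^ p = 1) (y : ℚ_[p]) :
    kozyrevWavelet p b d ζ j (y + (p : ℚ_[p]) ^ d) = ζ ^ j * kozyrevWavelet p b d ζ j y := by
  have hmem := IsUltrametricDist.norm_sub_le_iff_of_norm_sub_le (b := b)
    (x := y + (p : ℚ_[p]) ^ d) (y := y) (r := (p : ℝ) ^ (-d))
    (by rw [add_sub_cancel_left, Padic.norm_p_zpow])
  by_cases hy : ‖y - b‖ ≤ (p : ℝ) ^ (-d)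
  · obtain ⟨z, hz⟩ := exists_mul_zpow_eq_sub hy
    have hζj : (ζ ^ j) ^ p = 1 := by rw [← pow_mul, mul_comm, pow_mul, hζ, one_pow]
    have hz1 : ((z + 1 : ℤ_[p]) : ℚ_[p]) * (p : ℚ_[p]) ^ d = y + (p : ℚ_[p]) ^ d - b := by
      push_cast
      linear_combination hz
    rw [kozyrevWavelet_eq_of_mul_zpow_eq _ hz1, kozyrevWavelet_eq_of_mul_zpow_eq z hz, pow_mul,
      pow_mul, ← AddChar.zmodChar_apply hζj, ← AddChar.zmodChar_apply hζj, map_add, map_one,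
      AddChar.map_add_eq_mul, AddChar.zmodChar_apply, ← Nat.cast_one, AddChar.zmodChar_apply',
      pow_one, mul_comm]
  · rw [kozyrevWavelet_eq_zero_of_not_le hy, kozyrevWavelet_eq_zero_of_not_le (mt hmem.mp hy),
      mul_zero]

theorem integral_kozyrevWavelet_eq_zero [MeasurableSpace ℚ_[p]] [BorelSpace ℚ_[p]]
    (μ : Measure ℚ_[p]) [μ.IsAddRightInvariant] (hζ : ζ ^ p = 1) (hζj : ζ ^ j ≠ 1) :
    ∫ y, kozyrevWavelet p b d ζ j y ∂μ = 0 := by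
  have h := integral_add_right_eq_self (μ := μ) (kozyrevWavelet p b d ζ j) ((p : ℚ_[p]) ^ d)
  simp_rw [kozyrevWavelet_add_zpow hζ, integral_const_mul] at h
  have h' : (ζ ^ j - 1) * ∫ y, kozyrevWavelet p b d ζ j y ∂μ = 0 := by
    rw [sub_mul, h, one_mul, sub_self]
  exact (mul_eq_zero.mp h').resolve_left (sub_ne_zero.mpr hζj)

theorem norm_sub_rpow_smul_kozyrevWavelet_sub (α : ℝ) {x y : ℚ_[p]}
    (hx : ‖x - b‖ ≤ (p : ℝ) ^ (-d)) (hy : ‖y - b‖ ≤ (p : ℝ) ^ (-d)) :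
    ‖x - y‖ ^ (-α) • (kozyrevWavelet p b d ζ j y - kozyrevWavelet p b d ζ j x)
      = (p : ℝ) ^ ((d : ℝ) * α) • (kozyrevWavelet p b d ζ j y - kozyrevWavelet p b d ζ j x) := by
  by_cases h : ‖x - y‖ < (p : ℝ) ^ (-d)
  · rw [kozyrevWavelet_eq_of_norm_sub_lt h, sub_self, smul_zero, smul_zero]
  · have hxy : ‖x - y‖ = (p : ℝ) ^ (-d) := by
      refine le_antisymm ?_ (not_lt.mp h)
      rw [← sub_sub_sub_cancel_right x y b, sub_eq_add_neg]
      exact (Padic.nonarchimedean _ _).trans (max_le hx (by rwa [norm_neg]))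
    rw [hxy, ← Real.rpow_intCast, ← Real.rpow_mul (Nat.cast_nonneg p)]
    push_cast
    ring_nf

end KozyrevWavelet

/-- **Kozyrev wavelets are eigenfunctions of the Vladimirov-type operator on the
ball `B`**: for `x ∈ B`,
`∫_B |x − y|_p^{−α}(ψ_{B,j}(y) − ψ_{B,j}(x)) dμ(y) = −p^{d(α−1)}·ψ_{B,j}(x)`,
where `μ` is the Haar measure on `ℚ_p` with `μ(ℤ_p) = 1`. -/
theorem kozyrev_eigenfunction_on_ball (p : ℕ) [Fact p.Prime]
    [MeasurableSpace ℚ_[p]] [BorelSpace ℚ_[p]]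
    (μ : Measure ℚ_[p]) [μ.IsAddHaarMeasure]
    (hμ : μ {x : ℚ_[p] | ‖x‖ ≤ 1} = 1)
    (α : ℝ) (b : ℚ_[p]) (d : ℤ)
    (ζ : ℂ) (hζ : IsPrimitiveRoot ζ p)
    (j : ℕ) (hj1 : 1 ≤ j) (hj2 : j ≤ p - 1)
    (x : ℚ_[p]) (hx : ‖x - b‖ ≤ (p : ℝ) ^ (-d)) :
    ∫ y in {y : ℚ_[p] | ‖y - b‖ ≤ (p : ℝ) ^ (-d)},
        (‖x - y‖ ^ (-α)) • (kozyrevWavelet p b d ζ j y - kozyrevWavelet p b d ζ j x) ∂μ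
      = (-((p : ℝ) ^ ((d : ℝ) * (α - 1)))) • kozyrevWavelet p b d ζ j x := by
  set ψ := kozyrevWavelet p b d ζ j
  set B := closedBall b ((p : ℝ) ^ (-d))
  have hp0 : (0 : ℝ) < p := by exact_mod_cast (Fact.out : p.Prime).pos
  have hψ : IntegrableOn ψ B μ :=
    isLocallyConstant_kozyrevWavelet.continuous.continuousOn.integrableOn_compact
      (isCompact_closedBall _ _)
  have hmean : ∫ y in B, ψ y ∂μ = 0 := by
    have := (Fact.out : p.Prime).two_le
    rw [setIntegral_eq_integral_of_forall_compl_eq_zero (s := B)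
      fun y hy => kozyrevWavelet_eq_zero_of_not_le hy]
    exact integral_kozyrevWavelet_eq_zero μ hζ.pow_eq_one
      (hζ.pow_ne_one_of_pos_of_lt (by omega) (by omega))
  have hvol : μ.real B = (p : ℝ) ^ (-d) := by
    rw [measureReal_def, Padic.measure_closedBall_zpow μ (by convert hμ using 2; ext; simp),
      ENNReal.toReal_ofReal (zpow_pos hp0 _).le]
  change ∫ y in B, _ ∂μ = _
  rw [setIntegral_congr_fun measurableSet_closedBall
      fun y hy => norm_sub_rpow_smul_kozyrevWavelet_sub α hx hy,
    integral_smul, integral_sub hψ (integrableOn_const measure_closedBall_lt_top.ne), hmean,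
    setIntegral_const, hvol, zero_sub, smul_neg, smul_smul, ← Real.rpow_intCast,
    ← Real.rpow_add hp0, neg_smul]
  congr 3
  push_cast
  ring
end

section
/- Let e : V → ℝ and γ ∈ ℝ satisfy ∑_{w ∈ V, w ≠ v} K(v,w)·μ(U_w)·(e(w) − e(v)) = γ·e(v) for every v ∈ V (i.e. e is an eigenvector, with eigenvalue γ, of the Laplacian matrix associated with the weight matrix (K(v,w)·μ(U_w))_{v,w∈V}). Let φ = ∑_{v∈V} e(v)·1_{U_v} be the corresponding locally constant function on Z. Then for every x ∈ Z, H φ(x) = γ·φ(x). (Locally-constant part of the spectral theorem for H_• on L²(Z, dx).) -/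
open MeasureTheory

/-- The vertex whose ball contains `x` (junk value if there is none). -/
noncomputable def vertexOf {p : ℕ} [Fact p.Prime] {V : Type*} [Nonempty V]
    (U : V → Set ℚ_[p]) (x : ℚ_[p]) : V :=
  haveI := Classical.propDecidable (∃ v, x ∈ U v)
  if h : ∃ v, x ∈ U v then h.choose else Classical.arbitrary V

/-- The kernel `k_p(x,y) = |x − y|_p^{−α}` if `x, y` lie in the same vertex ball,
and `k_p(x,y) = K(v(x), v(y))` otherwise. -/
noncomputable def graphKernel {p : ℕ} [Fact p.Prime] {V : Type*} [Nonempty V]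
    [DecidableEq V] (U : V → Set ℚ_[p]) (α : ℝ) (K : V → V → ℝ)
    (x y : ℚ_[p]) : ℝ :=
  if vertexOf U x = vertexOf U y then ‖x - y‖ ^ (-α)
  else K (vertexOf U x) (vertexOf U y)

/-- The p-adic graph Laplacian `H u (x) = ∫_Z k_p(x,y)(u(y) − u(x)) dμ(y)` on
`Z = ⋃_v U_v` (real-valued version). -/
noncomputable def graphLaplacianR {p : ℕ} [Fact p.Prime] {V : Type*} [Nonempty V]
    [DecidableEq V] [MeasurableSpace ℚ_[p]] (μ : Measure ℚ_[p])
    (U : V → Set ℚ_[p]) (α : ℝ) (K : V → V → ℝ) (u : ℚ_[p] → ℝ) (x : ℚ_[p]) : ℝ :=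
  ∫ y in ⋃ v, U v, graphKernel U α K x y * (u y - u x) ∂μ

/-! Within a ball `φ y - φ x = 0`, so the singular part `|x - y|^(-α)` of the kernel never
contributes to `H φ`; between balls the kernel is the constant `K v w`. Hence on `U v` the
integrand is the step function `∑_w K(v,w) (e w - e v) 1_{U_w}`, whose integral is the Laplacian
matrix applied to `e`. -/

theorem Finset.sum_indicator_const_of_mem {X V M : Type*} [Fintype V] [AddCommMonoid M]
    {U : V → Set X} (hdisj : Pairwise (Function.onFun Disjoint U)) (c : V → M)
    {y : X} {w : V} (hy : y ∈ U w) :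
    ∑ v, (U v).indicator (fun _ => c v) y = c w := by
  rw [Finset.sum_eq_single_of_mem w (Finset.mem_univ w)]
  · exact Set.indicator_of_mem hy _
  · intro v _ hvw
    exact Set.indicator_of_notMem (fun hyv => Set.disjoint_left.mp (hdisj hvw) hyv hy) _

theorem MeasureTheory.setIntegral_iUnion_sum_indicator_const {X V : Type*} [MeasurableSpace X]
    {μ : Measure X} [Fintype V] {U : V → Set X} (hm : ∀ v, MeasurableSet (U v))
    (hfin : ∀ v, μ (U v) ≠ ⊤) (c : V → ℝ) :
    ∫ y in ⋃ v, U v, ∑ v, (U v).indicator (fun _ => c v) y ∂μ = ∑ v, μ.real (U v) * c v := by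
  rw [integral_finsetSum _ fun v _ => ((integrable_indicator_iff (hm v)).mpr
    (integrableOn_const (hfin v))).restrict]
  refine Finset.sum_congr rfl fun v _ => ?_
  rw [setIntegral_indicator (hm v), Set.inter_eq_self_of_subset_right (Set.subset_iUnion U v),
    setIntegral_const, smul_eq_mul]

section GraphKernel

variable {p : ℕ} [Fact p.Prime] {V : Type*} [Nonempty V] {U : V → Set ℚ_[p]}

theorem vertexOf_eq_of_mem (hdisj : Pairwise (Function.onFun Disjoint U))
    {y : ℚ_[p]} {w : V} (hy : y ∈ U w) : vertexOf U y = w := by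
  have hex : ∃ v, y ∈ U v := ⟨w, hy⟩
  rw [vertexOf, dif_pos hex]
  by_contra hne
  exact Set.disjoint_left.mp (hdisj hne) hex.choose_spec hy

theorem graphKernel_mul_sub_of_mem [DecidableEq V] (hdisj : Pairwise (Function.onFun Disjoint U))
    (α : ℝ) (K : V → V → ℝ) (c : V → ℝ) {x y : ℚ_[p]} {v w : V} (hx : x ∈ U v)
    (hy : y ∈ U w) :
    graphKernel U α K x y * (c w - c v) = K v w * (c w - c v) := by
  rw [graphKernel, vertexOf_eq_of_mem hdisj hx, vertexOf_eq_of_mem hdisj hy]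
  by_cases hvw : v = w
  · subst hvw; simp
  · rw [if_neg hvw]

end GraphKernel

theorem locally_constant_eigenfunction_graphLaplacian_general (p : ℕ) [Fact p.Prime]
    [MeasurableSpace ℚ_[p]] [BorelSpace ℚ_[p]]
    (μ : Measure ℚ_[p]) [μ.IsAddHaarMeasure]
    {V : Type*} [Fintype V] [Nonempty V] [DecidableEq V]
    (U : V → Set ℚ_[p]) (bc : V → ℚ_[p]) (rad : V → ℤ)
    (hU : ∀ v, U v = {x : ℚ_[p] | ‖x - bc v‖ ≤ (p : ℝ) ^ (-(rad v))})
    (hdisj : Pairwise (Function.onFun Disjoint U))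
    (α : ℝ) (K : V → V → ℝ)
    (e : V → ℝ) (γ : ℝ)
    (heig : ∀ v, ∑ w ∈ Finset.univ.erase v,
        K v w * (μ (U w)).toReal * (e w - e v) = γ * e v) :
    ∀ x ∈ ⋃ w, U w,
      graphLaplacianR μ U α K
          (fun z => ∑ v, Set.indicator (U v) (fun _ => e v) z) x
        = γ * ∑ v, Set.indicator (U v) (fun _ => e v) x := by
  intro x hx
  obtain ⟨v, hxv⟩ := Set.mem_iUnion.mp hx
  have hball : ∀ w, U w = Metric.closedBall (bc w) ((p : ℝ) ^ (-(rad w))) := fun w => by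
    ext y; rw [hU w, Metric.mem_closedBall, dist_eq_norm]; rfl
  have hm : ∀ w, MeasurableSet (U w) := fun w => hball w ▸ Metric.isClosed_closedBall.measurableSet
  have hfin : ∀ w, μ (U w) ≠ ⊤ := fun w => hball w ▸ measure_closedBall_lt_top.ne
  have hφ : ∀ {w y}, y ∈ U w → ∑ u, (U u).indicator (fun _ => e u) y = e w :=
    Finset.sum_indicator_const_of_mem hdisj e
  calc graphLaplacianR μ U α K (fun z => ∑ u, (U u).indicator (fun _ => e u) z) x
      = ∫ y in ⋃ w, U w, ∑ w, (U w).indicator (fun _ => K v w * (e w - e v)) y ∂μ := by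
        refine setIntegral_congr_fun (MeasurableSet.iUnion hm) fun y hy => ?_
        obtain ⟨w, hyw⟩ := Set.mem_iUnion.mp hy
        dsimp only
        rw [hφ hxv, hφ hyw, Finset.sum_indicator_const_of_mem hdisj _ hyw]
        exact graphKernel_mul_sub_of_mem hdisj α K e hxv hyw
    _ = ∑ w, K v w * μ.real (U w) * (e w - e v) := by
        rw [setIntegral_iUnion_sum_indicator_const hm hfin]
        exact Finset.sum_congr rfl fun w _ => by ring
    _ = γ * e v := by
        rw [← heig v, ← Finset.sum_erase _ (by rw [sub_self, mul_zero])]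
        rfl
    _ = γ * ∑ u, (U u).indicator (fun _ => e u) x := by rw [hφ hxv]

/-- **Locally-constant part of the spectral theorem for the p-adic graph Laplacian
`H_•` on `L²(Z, dx)`**: if `e : V → ℝ` is an eigenvector with eigenvalue `γ` of the
Laplacian matrix of the weight matrix `(K(v,w)·μ(U_w))`, then the locally constant
function `φ = ∑_v e(v)·1_{U_v}` satisfies `H φ = γ·φ` on `Z`. -/
theorem locally_constant_eigenfunction_graphLaplacian (p : ℕ) [Fact p.Prime]
    [MeasurableSpace ℚ_[p]] [BorelSpace ℚ_[p]]
    (μ : Measure ℚ_[p]) [μ.IsAddHaarMeasure]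
    (hμ : μ {x : ℚ_[p] | ‖x‖ ≤ 1} = 1)
    {V : Type*} [Fintype V] [Nonempty V] [DecidableEq V]
    (U : V → Set ℚ_[p]) (bc : V → ℚ_[p]) (rad : V → ℤ)
    (hU : ∀ v, U v = {x : ℚ_[p] | ‖x - bc v‖ ≤ (p : ℝ) ^ (-(rad v))})
    (hdisj : Pairwise (Function.onFun Disjoint U))
    (α : ℝ) (K : V → V → ℝ)
    (hK_nonneg : ∀ v w, 0 ≤ K v w) (hK_symm : ∀ v w, K v w = K w v)
    (hK_diag : ∀ v, K v v = 0)
    (e : V → ℝ) (γ : ℝ)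
    (heig : ∀ v, ∑ w ∈ Finset.univ.erase v,
        K v w * (μ (U w)).toReal * (e w - e v) = γ * e v) :
    ∀ x ∈ ⋃ w, U w,
      graphLaplacianR μ U α K
          (fun z => ∑ v, Set.indicator (U v) (fun _ => e v) z) x
        = γ * ∑ v, Set.indicator (U v) (fun _ => e v) x :=
  locally_constant_eigenfunction_graphLaplacian_general p μ U bc rad hU hdisj α K e γ heig
end
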